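/- arXiv:1908.02234 — 3 statements merged into one kernel-verified Lean document; each statement's English description precedes it below -/
import Mathlib

section
/- Let n ≥ 1 and let p_0, p_1, …, p_n be polynomials with complex coefficients such that p_j has degree exactly j for each j (in particular p_0 is a nonzero constant c and p_1(z) = a·z + b with a ≠ 0). Define K_n(z,w) = Σ_{j=0}^n p_j(z)·conj(p_j(w)). Then for all complex z ≠ w, K_n(z,z)·K_n(w,w) − |K_n(z,w)|² ≥ |c·a|²·|z − w|² > 0. -/
/-!
Lagrange's identity writes the Gram determinant `‖f‖²‖g‖² - |⟪f, g⟫|²` of the vectors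
`f = (p_j(z))_j` and `g = (p_j(w))_j` as a sum of the squared `2 × 2` minors
`|f_i g_j - f_j g_i|²`. Dropping all minors but those of the index pair `{0, 1}` leaves
`|p_0(z) p_1(w) - p_1(z) p_0(w)|² = |c a|² |z - w|²`, which is positive since `c`, `a`
are leading coefficients and `z ≠ w`.
-/

open Finset Polynomial

namespace Finset

variable {𝕜 ι : Type*} [RCLike 𝕜] (s : Finset ι) (f g : ι → 𝕜)

theorem lagrange_identity :
    2 * ((∑ i ∈ s, ‖f i‖ ^ 2) * (∑ i ∈ s, ‖g i‖ ^ 2) - ‖∑ i ∈ s, f i * starRingEnd 𝕜 (g i)‖ ^ 2)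
      = ∑ i ∈ s, ∑ j ∈ s, ‖f i * g j - f j * g i‖ ^ 2 := by
  apply RCLike.ofReal_injective (K := 𝕜)
  push_cast
  simp only [← RCLike.mul_conj, map_sum, map_sub, map_mul, RCLike.conj_conj]
  have expand : ∀ i j,
      (f i * g j - f j * g i) *
          (starRingEnd 𝕜 (f i) * starRingEnd 𝕜 (g j) - starRingEnd 𝕜 (f j) * starRingEnd 𝕜 (g i))
        = f i * starRingEnd 𝕜 (f i) * (g j * starRingEnd 𝕜 (g j))
          + g i * starRingEnd 𝕜 (g i) * (f j * starRingEnd 𝕜 (f j))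
          - f i * starRingEnd 𝕜 (g i) * (starRingEnd 𝕜 (f j) * g j)
          - starRingEnd 𝕜 (f i) * g i * (f j * starRingEnd 𝕜 (g j)) := fun i j => by ring
  simp only [expand, sum_add_distrib, sum_sub_distrib, ← mul_sum, ← sum_mul]
  ring

theorem norm_mul_sub_mul_sq_le_gram {i j : ι} (hi : i ∈ s) (hj : j ∈ s) (hij : i ≠ j) :
    ‖f i * g j - f j * g i‖ ^ 2
      ≤ (∑ k ∈ s, ‖f k‖ ^ 2) * (∑ k ∈ s, ‖g k‖ ^ 2) - ‖∑ k ∈ s, f k * starRingEnd 𝕜 (g k)‖ ^ 2 := by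
  set minor : ι → ι → ℝ := fun k l => ‖f k * g l - f l * g k‖ ^ 2
  have minor_nonneg : ∀ k l, 0 ≤ minor k l := fun _ _ => sq_nonneg _
  have minor_symm : minor j i = minor i j := by
    simp only [minor, norm_sub_rev, mul_comm (f j), mul_comm (f i)]
  have row_le : ∀ k, ∀ l ∈ s, minor k l ≤ ∑ m ∈ s, minor k m := fun k l hl =>
    single_le_sum (fun m _ => minor_nonneg k m) hl
  have two_rows_le : (∑ m ∈ s, minor i m) + ∑ m ∈ s, minor j m ≤ ∑ k ∈ s, ∑ m ∈ s, minor k m :=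
    add_le_sum (fun k _ => sum_nonneg fun m _ => minor_nonneg k m) hi hj hij
  have := lagrange_identity s f g
  linarith [row_le i j hj, row_le j i hi]

end Finset

namespace Polynomial

theorem eval_mul_eval_sub_eval_mul_eval_of_degree_le {R : Type*} [CommRing R] {p q : R[X]}
    (hp : p.degree ≤ 0) (hq : q.degree ≤ 1) (z w : R) :
    p.eval z * q.eval w - q.eval z * p.eval w = p.coeff 0 * q.coeff 1 * (w - z) := by
  rw [eq_C_of_degree_le_zero hp, eq_X_add_C_of_degree_le_one hq]
  simp only [eval_C, eval_add, eval_mul, eval_X, coeff_C_zero, coeff_add, coeff_C_mul_X,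
    coeff_C_succ, if_true]
  ring

end Polynomial

/-- for a polynomial basis `p_0,…,p_n` with `deg p_j = j` (so `p_0 = c ≠ 0`,
`p_1 = a·z + b` with `a ≠ 0`), the reproducing kernel `K_n(z,w) = Σ_j p_j(z)·conj(p_j(w))`
satisfies `K_n(z,z)·K_n(w,w) − |K_n(z,w)|² ≥ |c·a|²·|z−w|² > 0` for `z ≠ w`. -/
theorem kernel_determinant_pos
    (n : ℕ) (hn : 1 ≤ n) (p : ℕ → Polynomial ℂ)
    (hdeg : ∀ j ≤ n, (p j).degree = j)
    (c a : ℂ) (hc : c = (p 0).coeff 0) (ha : a = (p 1).coeff 1)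
    (z w : ℂ) (hzw : z ≠ w) :
    ‖c * a‖ ^ 2 * ‖z - w‖ ^ 2
      ≤ (∑ j ∈ Finset.range (n + 1), ‖(p j).eval z‖ ^ 2) *
          (∑ j ∈ Finset.range (n + 1), ‖(p j).eval w‖ ^ 2) -
        ‖∑ j ∈ Finset.range (n + 1), (p j).eval z * (starRingEnd ℂ) ((p j).eval w)‖ ^ 2
      ∧ 0 < ‖c * a‖ ^ 2 * ‖z - w‖ ^ 2 := by
  have hdeg0 := hdeg 0 n.zero_le
  have hdeg1 := hdeg 1 hn
  have hminor : (p 0).eval z * (p 1).eval w - (p 1).eval z * (p 0).eval w = c * a * (w - z) := by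
    rw [hc, ha]
    exact eval_mul_eval_sub_eval_mul_eval_of_degree_le hdeg0.le hdeg1.le z w
  have hca : c * a ≠ 0 := by
    rw [hc, ha]
    exact mul_ne_zero (coeff_ne_zero_of_eq_degree hdeg0) (coeff_ne_zero_of_eq_degree hdeg1)
  constructor
  · calc ‖c * a‖ ^ 2 * ‖z - w‖ ^ 2
        = ‖(p 0).eval z * (p 1).eval w - (p 1).eval z * (p 0).eval w‖ ^ 2 := by
          rw [hminor, norm_mul _ (w - z), norm_sub_rev, mul_pow]
      _ ≤ _ := norm_mul_sub_mul_sq_le_gram (range (n + 1)) (fun j => (p j).eval z)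
          (fun j => (p j).eval w) (mem_range.2 (by omega)) (mem_range.2 (by omega)) zero_ne_one
  · have := norm_pos_iff.2 hca
    have := norm_pos_iff.2 (sub_ne_zero.2 hzw)
    positivity
end

section
/- Let {φ_k} be OPUC for a Borel probability measure μ on the unit circle. For z, w ∈ ℂ with z·conj(w) ≠ 1, Σ_{j=0}^n φ_j(z)·conj(φ_j′(w)) = ( S_n(z,w) + z·K_n(z,w) ) / ( 1 − z·conj(w) ), where K_n(z,w) = Σ_{j=0}^n φ_j(z)·conj(φ_j(w)) and S_n(z,w) = conj( (φ_{n+1}^*)′(w) )·φ_{n+1}^*(z) − conj( φ_{n+1}′(w) )·φ_{n+1}(z). -/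
open MeasureTheory Polynomial Finset

noncomputable section

/-- The reversed polynomial `p*(z) = z^n·conj(p(1/conj z))`. -/
def starPoly (p : Polynomial ℂ) : Polynomial ℂ := (p.map (starRingEnd ℂ)).reverse

/-!
Multiplication by `z` is an isometry of `L²(μ)` on the circle and `⟨z φ_k, φ*_{n+1}⟩` equals
`⟨φ_{n+1}, z^{n-k} φ_k*⟩ = 0`, so `φ*_{n+1}, z φ_0, …, z φ_n` is a second orthonormal basis of the
polynomials of degree `≤ n + 1`. The kernel `∑ b_k(z) conj (b_k(w))` does not depend on the
orthonormal basis `b`; comparing the two bases gives the Christoffel–Darboux identity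
`φ*_{n+1}(z) conj φ*_{n+1}(w) + z conj(w) K_n(z,w) = K_{n+1}(z,w)`. Read as a polynomial identity
in `conj w`, it may be differentiated in `conj w`, which is the formula.
-/

open ComplexConjugate

/-- The change-of-basis matrix `A` from `c` to `b` satisfies `A * Aᴴ = 1`, hence `Aᴴ * A = 1` as it
is square. -/
theorem LinearMap.sum_mul_star_eq_of_orthonormal {𝕜 V ι : Type*} [CommRing 𝕜] [StarRing 𝕜]
    [AddCommMonoid V] [Module 𝕜 V] [Fintype ι] [DecidableEq ι]
    (B : V →ₗ[𝕜] V →ₗ⋆[𝕜] 𝕜) {b c : ι → V}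
    (hb : ∀ k l, B (b k) (b l) = (1 : Matrix ι ι 𝕜) k l)
    (hc : ∀ k l, B (c k) (c l) = (1 : Matrix ι ι 𝕜) k l)
    (hbc : ∀ k, b k ∈ Submodule.span 𝕜 (Set.range c)) (f g : V →ₗ[𝕜] 𝕜) :
    ∑ k, f (b k) * star (g (b k)) = ∑ k, f (c k) * star (g (c k)) := by
  open Matrix in
  choose A hA using fun k => (Submodule.mem_span_range_iff_exists_fun 𝕜).mp (hbc k)
  have hAA : of A * (of A)ᴴ = 1 := by
    ext k l
    rw [← hb, ← hA, ← hA]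
    simp [mul_apply, Finset.sum_apply, hc, one_apply, mul_comm, starRingEnd_apply]
  have hmulVec : ∀ h : V →ₗ[𝕜] 𝕜, (fun k => h (b k)) = of A *ᵥ fun j => h (c j) := by
    intro h
    ext k
    simp [← hA, mulVec, dotProduct]
  have key := congrArg (fun M => star (fun j => g (c j)) ⬝ᵥ M *ᵥ fun j => f (c j))
    (mul_eq_one_comm.mp hAA)
  simp only [one_mulVec, ← mulVec_mulVec, dotProduct_mulVec, ← star_mulVec, ← hmulVec] at key
  simpa [dotProduct, mul_comm] using key

theorem integrable_comp_exp_mul_I (μ : Measure ℝ) [IsFiniteMeasure μ] {f : ℂ → ℂ}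
    (hf : Continuous f) : Integrable (fun θ : ℝ => f (Complex.exp (θ * Complex.I))) μ := by
  obtain ⟨C, hC⟩ := (isCompact_sphere (0 : ℂ) 1).exists_bound_of_continuousOn hf.continuousOn
  refine .of_bound (by fun_prop) C (.of_forall fun θ => hC _ ?_)
  simp [Complex.norm_exp_ofReal_mul_I]

theorem integrable_eval_mul_conj_eval (μ : Measure ℝ) [IsFiniteMeasure μ] (p q : ℂ[X]) :
    Integrable (fun θ : ℝ => p.eval (Complex.exp (θ * Complex.I)) *
      conj (q.eval (Complex.exp (θ * Complex.I)))) μ :=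
  integrable_comp_exp_mul_I μ (f := fun u => p.eval u * conj (q.eval u)) (by fun_prop)

def circleInner (μ : Measure ℝ) [IsFiniteMeasure μ] : ℂ[X] →ₗ[ℂ] ℂ[X] →ₗ⋆[ℂ] ℂ :=
  LinearMap.mk₂'ₛₗ (RingHom.id ℂ) (starRingEnd ℂ)
    (fun p q => ∫ θ : ℝ, p.eval (Complex.exp (θ * Complex.I)) *
      conj (q.eval (Complex.exp (θ * Complex.I))) ∂μ)
    (fun p q r => by
      simp only [eval_add, add_mul]
      exact integral_add (integrable_eval_mul_conj_eval μ _ _) (integrable_eval_mul_conj_eval μ _ _))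
    (fun c p q => by simp only [eval_smul, smul_eq_mul, mul_assoc, integral_const_mul]; rfl)
    (fun p q r => by
      simp only [eval_add, map_add, mul_add]
      exact integral_add (integrable_eval_mul_conj_eval μ _ _) (integrable_eval_mul_conj_eval μ _ _))
    (fun c p q => by
      simp only [eval_smul, smul_eq_mul, map_mul, mul_left_comm _ (conj c), integral_const_mul])

theorem circleInner_apply (μ : Measure ℝ) [IsFiniteMeasure μ] (p q : ℂ[X]) :
    circleInner μ p q = ∫ θ : ℝ, p.eval (Complex.exp (θ * Complex.I)) *
      conj (q.eval (Complex.exp (θ * Complex.I))) ∂μ := rfl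

theorem eval_map_conj (p : ℂ[X]) (w : ℂ) :
    (p.map (starRingEnd ℂ)).eval (conj w) = conj (p.eval w) := by
  rw [eval_map, eval₂_at_apply]

theorem natDegree_starPoly_le (p : ℂ[X]) : (starPoly p).natDegree ≤ p.natDegree :=
  (reverse_natDegree_le _).trans (natDegree_map _).le

theorem eval_starPoly_of_mul_conj_eq_one (p : ℂ[X]) {u : ℂ} (hu : u * conj u = 1) :
    (starPoly p).eval u = u ^ p.natDegree * conj (p.eval u) := by
  let : Invertible (conj u) := ⟨u, hu, by rw [mul_comm]; exact hu⟩
  have hinv : (conj u)⁻¹ = u := inv_eq_of_mul_eq_one_right (by rw [mul_comm]; exact hu)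
  have h : (starPoly p).eval u * conj u ^ p.natDegree = conj (p.eval u) := by
    simpa [starPoly, hinv] using
      eval₂_reverse_mul_pow (RingHom.id ℂ) (conj u) (p.map (starRingEnd ℂ))
  have hd : (u * conj u) ^ p.natDegree = 1 := by rw [hu, one_pow]
  linear_combination u ^ p.natDegree * h - (starPoly p).eval u * hd

namespace circleInner

variable {μ : Measure ℝ} [IsFiniteMeasure μ]

theorem conj_symm (p q : ℂ[X]) : circleInner μ q p = conj (circleInner μ p q) := by
  simp only [circleInner_apply, ← integral_conj, map_mul, Complex.conj_conj, mul_comm]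

theorem congr_of_eval {p q p' q' : ℂ[X]}
    (h : ∀ u : ℂ, u * conj u = 1 → p.eval u * conj (q.eval u) = p'.eval u * conj (q'.eval u)) :
    circleInner μ p q = circleInner μ p' q' := by
  simp only [circleInner_apply]
  congr 1 with θ
  refine h _ ?_
  rw [Complex.mul_conj, Complex.normSq_eq_norm_sq, Complex.norm_exp_ofReal_mul_I]
  simp

theorem X_mul_X_mul (p q : ℂ[X]) : circleInner μ (X * p) (X * q) = circleInner μ p q :=
  congr_of_eval fun u hu => by
    simp only [eval_mul, eval_X, map_mul]
    linear_combination (p.eval u * conj (q.eval u)) * hu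

theorem starPoly_starPoly {p q : ℂ[X]} (h : p.natDegree = q.natDegree) :
    circleInner μ (starPoly p) (starPoly q) = circleInner μ q p :=
  congr_of_eval fun u hu => by
    have hd : (u * conj u) ^ q.natDegree = 1 := by rw [hu, one_pow]
    simp only [eval_starPoly_of_mul_conj_eq_one _ hu, h, map_mul, map_pow, Complex.conj_conj]
    linear_combination (q.eval u * conj (p.eval u)) * hd

theorem X_mul_starPoly {p q : ℂ[X]} {m : ℕ} (h : q.natDegree + 1 + m = p.natDegree) :
    circleInner μ (X * q) (starPoly p) = circleInner μ p (X ^ m * starPoly q) :=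
  congr_of_eval fun u hu => by
    simp only [eval_mul, eval_X, eval_pow, eval_starPoly_of_mul_conj_eq_one _ hu, ← h,
      map_mul, map_pow, Complex.conj_conj]
    linear_combination (q.eval u * p.eval u * conj u ^ (q.natDegree + m)) * hu

end circleInner

theorem Polynomial.Sequence.mem_span_range_of_natDegree_le {𝕜 : Type*} [Field 𝕜]
    (φ : Polynomial.Sequence 𝕜) {m : ℕ} {p : 𝕜[X]} (hp : p.natDegree ≤ m) :
    p ∈ Submodule.span 𝕜 (Set.range fun j : Fin (m + 1) => φ j) := by
  rw [← Function.comp_def, Set.range_comp, Fin.range_val,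
    φ.span_degreeLT fun i _ => (leadingCoeff_ne_zero.mpr (φ.ne_zero i)).isUnit,
    degreeLT_succ_eq_degreeLE, mem_degreeLE, ← natDegree_le_iff_degree_le]
  exact hp

def starConsXMul (φ : ℕ → ℂ[X]) (n : ℕ) : Fin (n + 2) → ℂ[X] :=
  Fin.cons (starPoly (φ (n + 1))) fun j : Fin (n + 1) => X * φ j

theorem starConsXMul_mem_span (φ : Polynomial.Sequence ℂ) (n : ℕ) (k : Fin (n + 2)) :
    starConsXMul φ n k ∈ Submodule.span ℂ (Set.range fun j : Fin (n + 2) => φ j) := by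
  refine φ.mem_span_range_of_natDegree_le ?_
  induction k using Fin.cases with
  | zero => simpa [starConsXMul] using natDegree_starPoly_le (φ (n + 1))
  | succ j =>
    refine (natDegree_mul_le_of_le natDegree_X_le (φ.natDegree_eq j).le).trans ?_
    omega

section Orthonormal

variable {μ : Measure ℝ} [IsFiniteMeasure μ] (φ : Polynomial.Sequence ℂ)
  (horth : ∀ a b, circleInner μ (φ a) (φ b) = if a = b then 1 else 0)

include horth

theorem circleInner_eq_zero_of_natDegree_le {m : ℕ} {p : ℂ[X]} (hp : p.natDegree ≤ m) :
    circleInner μ (φ (m + 1)) p = 0 := by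
  suffices Submodule.span ℂ (Set.range fun j : Fin (m + 1) => φ j) ≤
      LinearMap.ker (circleInner μ (φ (m + 1))) from
    this (φ.mem_span_range_of_natDegree_le hp)
  rw [Submodule.span_le]
  rintro _ ⟨j, rfl⟩
  simp [horth, j.isLt.ne']

theorem circleInner_starConsXMul (n : ℕ) (k l : Fin (n + 2)) :
    circleInner μ (starConsXMul φ n k) (starConsXMul φ n l) = (1 : Matrix _ _ ℂ) k l := by
  have hcross : ∀ k : Fin (n + 1), circleInner μ (X * φ k) (starPoly (φ (n + 1))) = 0 := by
    intro k
    have hdeg : (φ k).natDegree + 1 + (n - k) = (φ (n + 1)).natDegree := by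
      simp only [Polynomial.Sequence.natDegree_eq]
      omega
    rw [circleInner.X_mul_starPoly hdeg]
    refine circleInner_eq_zero_of_natDegree_le φ horth <|
      (natDegree_mul_le_of_le (natDegree_X_pow_le _) (natDegree_starPoly_le _)).trans ?_
    rw [φ.natDegree_eq]
    omega
  induction k using Fin.cases <;> induction l using Fin.cases
  · simp [starConsXMul, circleInner.starPoly_starPoly, horth]
  · rw [circleInner.conj_symm, Matrix.one_apply_ne (Fin.succ_ne_zero _).symm]
    simp [starConsXMul, hcross]
  · simp [starConsXMul, hcross]
  · simp [starConsXMul, circleInner.X_mul_X_mul, horth, Matrix.one_apply, Fin.val_inj]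

theorem christoffel_darboux (n : ℕ) (z w : ℂ) :
    (starPoly (φ (n + 1))).eval z * conj ((starPoly (φ (n + 1))).eval w) +
        z * conj w * ∑ j ∈ range (n + 1), (φ j).eval z * conj ((φ j).eval w) =
      ∑ j ∈ range (n + 2), (φ j).eval z * conj ((φ j).eval w) := by
  have h := LinearMap.sum_mul_star_eq_of_orthonormal (circleInner μ)
    (circleInner_starConsXMul φ horth n) (fun k l => by simp [horth, Matrix.one_apply, Fin.val_inj])
    (starConsXMul_mem_span φ n) (leval z) (leval w)
  rw [Fin.sum_univ_succ] at h
  simp only [starConsXMul, Fin.cons_zero, Fin.cons_succ, leval_apply, ← starRingEnd_apply] at h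
  rw [sum_range, sum_range, ← h, mul_sum]
  simp [mul_mul_mul_comm]

theorem christoffel_darboux_conj_poly (n : ℕ) (z : ℂ) :
    C ((starPoly (φ (n + 1))).eval z) * (starPoly (φ (n + 1))).map (starRingEnd ℂ) +
        C z * X * ∑ j ∈ range (n + 1), C ((φ j).eval z) * (φ j).map (starRingEnd ℂ) =
      ∑ j ∈ range (n + 2), C ((φ j).eval z) * (φ j).map (starRingEnd ℂ) := by
  refine Polynomial.funext fun u => ?_
  obtain ⟨w, rfl⟩ : ∃ w, conj w = u := ⟨conj u, Complex.conj_conj u⟩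
  simpa only [eval_add, eval_mul, eval_C, eval_X, eval_finsetSum, eval_map_conj]
    using christoffel_darboux φ horth n z w

end Orthonormal

theorem christoffel_darboux_derivative_01_general
    (μ : Measure ℝ) [IsProbabilityMeasure μ]
    (φ : ℕ → Polynomial ℂ)
    (hdeg : ∀ k, (φ k).degree = k)
    (horth : ∀ n m, ∫ θ, (φ n).eval (Complex.exp (θ * Complex.I)) *
        (starRingEnd ℂ) ((φ m).eval (Complex.exp (θ * Complex.I))) ∂μ
        = if n = m then 1 else 0)
    (n : ℕ) (z w : ℂ) (hzw : z * (starRingEnd ℂ) w ≠ 1)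
    (K S : ℂ)
    (hK : K = ∑ j ∈ Finset.range (n + 1),
        (φ j).eval z * (starRingEnd ℂ) ((φ j).eval w))
    (hS : S = (starRingEnd ℂ) ((starPoly (φ (n+1))).derivative.eval w) *
          (starPoly (φ (n+1))).eval z
        - (starRingEnd ℂ) ((φ (n+1)).derivative.eval w) * (φ (n+1)).eval z) :
    ∑ j ∈ Finset.range (n + 1),
        (φ j).eval z * (starRingEnd ℂ) ((φ j).derivative.eval w)
      = (S + z * K) / (1 - z * (starRingEnd ℂ) w) := by
  have hcd := congrArg (fun p => (derivative p).eval (conj w))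
    (christoffel_darboux_conj_poly ⟨φ, hdeg⟩ horth n z)
  simp only [derivative_add, derivative_mul, derivative_C, derivative_X, derivative_sum,
    derivative_map, zero_mul, zero_add, mul_one, eval_add, eval_mul, eval_C, eval_X,
    eval_finsetSum, eval_map_conj, sum_range_succ _ (n + 1)] at hcd
  rw [eq_div_iff (sub_ne_zero.mpr hzw.symm), hK, hS]
  linear_combination -hcd

/-- differentiated Christoffel–Darboux formula:
`Σ_{j=0}^n φ_j(z)·conj(φ_j′(w)) = (S_n(z,w) + z·K_n(z,w))/(1 − z·conj(w))`. -/
theorem christoffel_darboux_derivative_01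
    (μ : Measure ℝ) [IsProbabilityMeasure μ]
    (φ : ℕ → Polynomial ℂ)
    (hdeg : ∀ k, (φ k).degree = k)
    (hlead : ∀ k, ∃ κ : ℝ, 0 < κ ∧ (φ k).leadingCoeff = (κ : ℂ))
    (horth : ∀ n m, ∫ θ, (φ n).eval (Complex.exp (θ * Complex.I)) *
        (starRingEnd ℂ) ((φ m).eval (Complex.exp (θ * Complex.I))) ∂μ
        = if n = m then 1 else 0)
    (n : ℕ) (z w : ℂ) (hzw : z * (starRingEnd ℂ) w ≠ 1)
    (K S : ℂ)
    (hK : K = ∑ j ∈ Finset.range (n + 1),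
        (φ j).eval z * (starRingEnd ℂ) ((φ j).eval w))
    (hS : S = (starRingEnd ℂ) ((starPoly (φ (n+1))).derivative.eval w) *
          (starPoly (φ (n+1))).eval z
        - (starRingEnd ℂ) ((φ (n+1)).derivative.eval w) * (φ (n+1)).eval z) :
    ∑ j ∈ Finset.range (n + 1),
        (φ j).eval z * (starRingEnd ℂ) ((φ j).derivative.eval w)
      = (S + z * K) / (1 - z * (starRingEnd ℂ) w) :=
  christoffel_darboux_derivative_01_general μ φ hdeg horth n z w hzw K S hK hS
end
end

section
/- Let 1 < s < t and A(s,t) = { z ∈ ℂ : s < |z| < t }. Then (1/π²)·∫_{A(s,t)} ∫_{A(s,t)} 1/|1 − z·conj(w)|⁴ dA(z) dA(w) = −(t² − s²)²·(1 + (st)²) / ( (1 − t⁴)(1 − s⁴)(1 − (st)²) ), where dA denotes Lebesgue area measure on ℂ. (The right-hand side is positive since 1 − t⁴, 1 − s⁴, and 1 − (st)² are all negative.) -/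
/-!
In polar coordinates `z = r e^{iθ}` one has `|1 - z c|² = 1 + (r|c|)² - 2 r|c| cos (θ + arg c)`,
and over a period `∫ (a - b cos θ)⁻² dθ = 2π a / (a² - b²)^{3/2}`. Hence for `w` in the annulus the
inner integral is the radial function `π (s² / ((s|w|)² - 1)² - t² / ((t|w|)² - 1)²)`, and the
outer integral reduces to an elementary integral in `|w|`.
-/

open MeasureTheory Real Set

section Angular

variable {a b c : ℝ}

lemma hasDerivAt_sin_div_sub_mul_cos (x : ℝ) (hc2 : c ^ 2 = a ^ 2 - b ^ 2)
    (hD : a - b * cos x ≠ 0) :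
    HasDerivAt (fun x => b * sin x / (a - b * cos x))
      (c ^ 2 / (a - b * cos x) ^ 2 - a / (a - b * cos x)) x := by
  have hden : HasDerivAt (fun x => a - b * cos x) (b * sin x) x := by
    simpa using ((hasDerivAt_cos x).const_mul b).const_sub a
  refine (((hasDerivAt_sin x).const_mul b).div hden hD).congr_deriv ?_
  field_simp
  linear_combination (-b ^ 2) * sin_sq_add_cos_sq x - hc2

lemma hasDerivAt_add_two_mul_arctan (x : ℝ) (hc : 0 < c) (hc2 : c ^ 2 = a ^ 2 - b ^ 2)
    (hD : 0 < a - b * cos x) :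
    HasDerivAt (fun x => x + 2 * arctan (b * sin x / (a - b * cos x + c)))
      (c / (a - b * cos x)) x := by
  have hden : HasDerivAt (fun x => a - b * cos x + c) (b * sin x) x := by
    simpa using (((hasDerivAt_cos x).const_mul b).const_sub a).add_const c
  have hE : a - b * cos x + c ≠ 0 := by positivity
  refine ((hasDerivAt_id x).add
    ((((hasDerivAt_sin x).const_mul b).div hden hE).arctan.const_mul 2)).congr_deriv ?_
  simp only [Pi.div_apply]
  field_simp
  linear_combination (-(b ^ 2 * (a - b * cos x + c))) * sin_sq_add_cos_sq x -
    (c + (a - b * cos x)) * hc2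

lemma integral_one_div_sub_mul_cos_sq (x : ℝ) (hba : |b| < a) (hc : 0 < c)
    (hc2 : c ^ 2 = a ^ 2 - b ^ 2) :
    ∫ θ in x..x + 2 * π, 1 / (a - b * cos θ) ^ 2 = 2 * π * a / c ^ 3 := by
  have hD : ∀ θ, 0 < a - b * cos θ := fun θ => by
    have : b * cos θ ≤ |b| := (le_abs_self _).trans <| by
      rw [abs_mul]; exact mul_le_of_le_one_right (abs_nonneg b) (abs_cos_le_one θ)
    linarith
  have hprim : ∀ θ, HasDerivAt (fun θ => (b * sin θ / (a - b * cos θ) +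
      a / c * (θ + 2 * arctan (b * sin θ / (a - b * cos θ + c)))) / c ^ 2)
      (1 / (a - b * cos θ) ^ 2) θ := fun θ => by
    -- With `D = a - b cos θ`: `1 / D² = ((b sin θ / D)' + (a / c) · (c / D)) / c²`, and
    -- `θ + 2 arctan (b sin θ / (D + c))` is a primitive of `c / D` continuous on all of `ℝ`
    -- (unlike the textbook `2 arctan (√((a + b) / (a - b)) tan (θ / 2))`).
    refine (((hasDerivAt_sin_div_sub_mul_cos θ hc2 (hD θ).ne').add
      ((hasDerivAt_add_two_mul_arctan θ hc hc2 (hD θ)).const_mul (a / c))).div_const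
      (c ^ 2)).congr_deriv ?_
    have := (hD θ).ne'
    field_simp
    ring
  rw [intervalIntegral.integral_eq_sub_of_hasDerivAt (fun θ _ => hprim θ)
    ((continuous_const.div (by fun_prop) fun θ => (pow_pos (hD θ) 2).ne').intervalIntegrable _ _)]
  simp only [sin_add_two_pi, cos_add_two_pi]
  field_simp
  ring

end Angular

lemma complexPolarCoord_symm_mul (r θ : ℝ) (c : ℂ) :
    Complex.polarCoord.symm (r, θ) * c = Complex.polarCoord.symm (r * ‖c‖, θ + c.arg) := by
  conv_lhs => rw [← Complex.norm_mul_cos_add_sin_mul_I c]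
  simp only [Complex.polarCoord_symm_apply]
  push_cast
  rw [Complex.cos_add, Complex.sin_add]
  linear_combination (↑r * ↑‖c‖ * Complex.sin ↑θ * Complex.sin ↑c.arg) * Complex.I_sq

lemma norm_one_sub_complexPolarCoord_symm_sq (R φ : ℝ) :
    ‖1 - Complex.polarCoord.symm (R, φ)‖ ^ 2 = 1 + R ^ 2 - 2 * R * cos φ := by
  rw [Complex.sq_norm, Complex.normSq_apply, Complex.polarCoord_symm_apply]
  simp only [Complex.sub_re, Complex.sub_im, Complex.mul_re, Complex.mul_im, Complex.add_re,
    Complex.add_im, Complex.ofReal_re, Complex.ofReal_im, Complex.I_re, Complex.I_im,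
    Complex.one_re, Complex.one_im]
  linear_combination R ^ 2 * sin_sq_add_cos_sq φ

lemma norm_one_sub_complexPolarCoord_symm_mul_pow_four (r θ : ℝ) (c : ℂ) :
    ‖1 - Complex.polarCoord.symm (r, θ) * c‖ ^ 4 =
      (1 + (r * ‖c‖) ^ 2 - 2 * (r * ‖c‖) * cos (θ + c.arg)) ^ 2 := by
  rw [complexPolarCoord_symm_mul, ← norm_one_sub_complexPolarCoord_symm_sq]
  ring

section Polar

variable {E : Type*} [NormedAddCommGroup E] [NormedSpace ℝ E] {s t : ℝ}

lemma measurableSet_annulus : MeasurableSet {z : ℂ | s < ‖z‖ ∧ ‖z‖ < t} :=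
  measurableSet_lt measurable_const measurable_norm |>.inter
    (measurableSet_lt measurable_norm measurable_const)

lemma continuous_complexPolarCoord_symm : Continuous Complex.polarCoord.symm := by
  simp only [funext Complex.polarCoord_symm_apply]
  fun_prop

lemma complexPolarCoord_symm_preimage_annulus (hs : 0 ≤ s) :
    polarCoord.target ∩ Complex.polarCoord.symm ⁻¹' {z | s < ‖z‖ ∧ ‖z‖ < t} =
      Ioo s t ×ˢ Ioo (-π) π := by
  ext ⟨r, θ⟩
  simp only [polarCoord_target, mem_inter_iff, mem_prod, mem_Ioi, mem_preimage, mem_ofPred_eq,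
    Complex.norm_polarCoord_symm, mem_Ioo]
  constructor
  · rintro ⟨⟨hr, hθ⟩, h⟩
    rw [abs_of_pos hr] at h
    exact ⟨h, hθ⟩
  · rintro ⟨⟨hsr, hrt⟩, hθ⟩
    have hr : 0 < r := hs.trans_lt hsr
    rw [abs_of_pos hr]
    exact ⟨⟨hr, hθ⟩, hsr, hrt⟩

lemma integral_annulus_eq_integral_polarCoord (hs : 0 ≤ s) (f : ℂ → E) :
    ∫ z in {z : ℂ | s < ‖z‖ ∧ ‖z‖ < t}, f z =
      ∫ p in Ioo s t ×ˢ Ioo (-π) π, p.1 • f (Complex.polarCoord.symm p) := by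
  rw [← integral_indicator measurableSet_annulus, ← Complex.integral_comp_polarCoord_symm,
    ← complexPolarCoord_symm_preimage_annulus hs,
    ← setIntegral_indicator (measurableSet_annulus.preimage
      continuous_complexPolarCoord_symm.measurable)]
  simp only [indicator_smul]
  rfl

lemma integral_annulus_eq_intervalIntegral_polarCoord (hs : 0 ≤ s) (hst : s ≤ t)
    {f : ℂ → E} (hf : ContinuousOn f {z | s ≤ ‖z‖ ∧ ‖z‖ ≤ t}) :
    ∫ z in {z : ℂ | s < ‖z‖ ∧ ‖z‖ < t}, f z =
      ∫ r in s..t, r • ∫ θ in -π..π, f (Complex.polarCoord.symm (r, θ)) := by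
  have hcont : ContinuousOn (fun p : ℝ × ℝ => p.1 • f (Complex.polarCoord.symm p))
      (Icc s t ×ˢ Icc (-π) π) := by
    refine continuous_fst.continuousOn.smul
      (hf.comp continuous_complexPolarCoord_symm.continuousOn ?_)
    rintro ⟨r, θ⟩ ⟨⟨hsr, hrt⟩, -⟩
    simpa [abs_of_nonneg (hs.trans hsr)] using ⟨hsr, hrt⟩
  have hint := (hcont.integrableOn_compact (μ := volume)
    (isCompact_Icc.prod isCompact_Icc)).mono_set (prod_mono Ioo_subset_Icc_self Ioo_subset_Icc_self)
  rw [Measure.volume_eq_prod] at hint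
  rw [integral_annulus_eq_integral_polarCoord hs, Measure.volume_eq_prod, setIntegral_prod _ hint,
    intervalIntegral.integral_of_le hst, integral_Ioc_eq_integral_Ioo]
  simp only [intervalIntegral.integral_of_le (neg_le_self pi_pos.le), integral_Ioc_eq_integral_Ioo,
    integral_smul]

lemma integral_annulus_comp_norm [CompleteSpace E] (hs : 0 ≤ s) (hst : s ≤ t) {g : ℝ → E}
    (hg : ContinuousOn g (Icc s t)) :
    ∫ z in {z : ℂ | s < ‖z‖ ∧ ‖z‖ < t}, g ‖z‖ = (2 * π) • ∫ r in s..t, r • g r := by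
  rw [integral_annulus_eq_intervalIntegral_polarCoord (f := fun z => g ‖z‖) hs hst
    (hg.comp continuous_norm.continuousOn fun z hz => hz), ← intervalIntegral.integral_smul]
  refine intervalIntegral.integral_congr fun r hr => ?_
  rw [uIcc_of_le hst] at hr
  simp only [Complex.norm_polarCoord_symm, abs_of_nonneg (hs.trans hr.1),
    intervalIntegral.integral_const, sub_neg_eq_add, smul_comm r]
  congr 2
  ring

end Polar

section Radial

variable {s t a b u v : ℝ}

lemma sq_mul_sub_one_pos (hu : 0 ≤ u) (hau : 1 < a * u) (hv : u ≤ v) : 0 < (a * v) ^ 2 - 1 := by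
  have ha : 0 < a := pos_of_mul_pos_left (one_pos.trans hau) hu
  have : 1 < a * v := hau.trans_le (mul_le_mul_of_nonneg_left hv ha.le)
  nlinarith

lemma integral_mul_one_add_sq_div_sq_sub_one_pow_three (hs : 0 ≤ s) (hst : s ≤ t)
    (hsa : 1 < s * a) :
    ∫ r in s..t, r * (2 * π * (1 + (r * a) ^ 2) / ((r * a) ^ 2 - 1) ^ 3) =
      π * (s ^ 2 / ((s * a) ^ 2 - 1) ^ 2 - t ^ 2 / ((t * a) ^ 2 - 1) ^ 2) := by
  have hpos : ∀ r ∈ uIcc s t, 0 < (r * a) ^ 2 - 1 := fun r hr => by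
    rw [uIcc_of_le hst] at hr
    simpa only [mul_comm r] using sq_mul_sub_one_pos hs (mul_comm s a ▸ hsa) hr.1
  have hderiv : ∀ r ∈ uIcc s t, HasDerivAt (fun r => -π * (r ^ 2 / ((r * a) ^ 2 - 1) ^ 2))
      (r * (2 * π * (1 + (r * a) ^ 2) / ((r * a) ^ 2 - 1) ^ 3)) r := fun r hr => by
    have := (hpos r hr).ne'
    have hnum : HasDerivAt (fun r => r ^ 2) (2 * r) r := by simpa using hasDerivAt_pow 2 r
    have hden : HasDerivAt (fun r => ((r * a) ^ 2 - 1) ^ 2)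
        (2 * ((r * a) ^ 2 - 1) * (2 * (r * a) * a)) r := by
      simpa using ((((hasDerivAt_id' r).mul_const a).fun_pow 2).sub_const 1).fun_pow 2
    refine ((hnum.div hden (by positivity)).const_mul (-π)).congr_deriv ?_
    field_simp
    ring
  rw [intervalIntegral.integral_eq_sub_of_hasDerivAt hderiv (ContinuousOn.intervalIntegrable
    (continuousOn_id.mul (ContinuousOn.div (by fun_prop) (by fun_prop)
      fun r hr => (pow_pos (hpos r hr) 3).ne')))]
  ring

lemma integral_mul_sq_div_sq_sub_one_sq_sub (hu : 0 ≤ u) (huv : u ≤ v) (hau : 1 < a * u)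
    (hbu : 1 < b * u) :
    ∫ ρ in u..v, ρ * (a ^ 2 / ((a * ρ) ^ 2 - 1) ^ 2 - b ^ 2 / ((b * ρ) ^ 2 - 1) ^ 2) =
      (1 / ((a * u) ^ 2 - 1) - 1 / ((a * v) ^ 2 - 1) -
        (1 / ((b * u) ^ 2 - 1) - 1 / ((b * v) ^ 2 - 1))) / 2 := by
  have hpos : ∀ ρ ∈ uIcc u v, 0 < (a * ρ) ^ 2 - 1 ∧ 0 < (b * ρ) ^ 2 - 1 := fun ρ hρ => by
    rw [uIcc_of_le huv] at hρ
    exact ⟨sq_mul_sub_one_pos hu hau hρ.1, sq_mul_sub_one_pos hu hbu hρ.1⟩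
  have hderiv : ∀ ρ ∈ uIcc u v,
      HasDerivAt (fun ρ => (1 / ((b * ρ) ^ 2 - 1) - 1 / ((a * ρ) ^ 2 - 1)) / 2)
        (ρ * (a ^ 2 / ((a * ρ) ^ 2 - 1) ^ 2 - b ^ 2 / ((b * ρ) ^ 2 - 1) ^ 2)) ρ := fun ρ hρ => by
    obtain ⟨ha, hb⟩ := hpos ρ hρ
    have hsq (c : ℝ) : HasDerivAt (fun ρ => (c * ρ) ^ 2 - 1) (2 * (c * ρ) * c) ρ := by
      simpa using (((hasDerivAt_id' ρ).const_mul c).fun_pow 2).sub_const 1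
    refine ((((hasDerivAt_const ρ 1).div (hsq b) hb.ne').sub
      ((hasDerivAt_const ρ 1).div (hsq a) ha.ne')).div_const 2).congr_deriv ?_
    field_simp
    ring
  rw [intervalIntegral.integral_eq_sub_of_hasDerivAt hderiv (ContinuousOn.intervalIntegrable
    (continuousOn_id.mul (ContinuousOn.sub
      (ContinuousOn.div (by fun_prop) (by fun_prop) fun ρ hρ => (pow_pos (hpos ρ hρ).1 2).ne')
      (ContinuousOn.div (by fun_prop) (by fun_prop) fun ρ hρ => (pow_pos (hpos ρ hρ).2 2).ne'))))]
  ring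

end Radial

lemma integral_one_div_norm_one_sub_complexPolarCoord_symm_mul_pow_four (r : ℝ) (c : ℂ)
    (hrc : 1 < r * ‖c‖) :
    ∫ θ in -π..π, 1 / ‖1 - Complex.polarCoord.symm (r, θ) * c‖ ^ 4 =
      2 * π * (1 + (r * ‖c‖) ^ 2) / ((r * ‖c‖) ^ 2 - 1) ^ 3 := by
  simp only [norm_one_sub_complexPolarCoord_symm_mul_pow_four]
  rw [intervalIntegral.integral_comp_add_right
      (fun θ => 1 / (1 + (r * ‖c‖) ^ 2 - 2 * (r * ‖c‖) * cos θ) ^ 2),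
    show π + c.arg = -π + c.arg + 2 * π by ring]
  refine integral_one_div_sub_mul_cos_sq _ ?_ (by nlinarith) (by ring)
  rw [abs_of_pos (by linarith)]
  nlinarith

lemma integral_annulus_one_div_norm_one_sub_mul_pow_four {s t : ℝ} (hs : 0 ≤ s) (hst : s ≤ t)
    (c : ℂ) (hsc : 1 < s * ‖c‖) :
    ∫ z in {z : ℂ | s < ‖z‖ ∧ ‖z‖ < t}, 1 / ‖1 - z * c‖ ^ 4 =
      π * (s ^ 2 / ((s * ‖c‖) ^ 2 - 1) ^ 2 - t ^ 2 / ((t * ‖c‖) ^ 2 - 1) ^ 2) := by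
  have hcont : ContinuousOn (fun z : ℂ => 1 / ‖1 - z * c‖ ^ 4) {z | s ≤ ‖z‖ ∧ ‖z‖ ≤ t} := by
    refine continuousOn_const.div (by fun_prop) fun z hz => pow_ne_zero _ ?_
    have : 1 < ‖z * c‖ := by
      rw [norm_mul]; exact hsc.trans_le (mul_le_mul_of_nonneg_right hz.1 (norm_nonneg c))
    linarith [norm_sub_norm_le (z * c) 1, norm_one (α := ℂ), norm_sub_rev (z * c) 1]
  rw [integral_annulus_eq_intervalIntegral_polarCoord hs hst hcont,
    ← integral_mul_one_add_sq_div_sq_sub_one_pow_three hs hst hsc]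
  refine intervalIntegral.integral_congr fun r hr => ?_
  rw [uIcc_of_le hst] at hr
  rw [smul_eq_mul, integral_one_div_norm_one_sub_complexPolarCoord_symm_mul_pow_four r c
    (hsc.trans_le (mul_le_mul_of_nonneg_right hr.1 (norm_nonneg c)))]

lemma integral_annulus_integral_annulus_one_div_norm_one_sub_mul_conj_pow_four {s t : ℝ}
    (hs : 1 < s) (hst : s ≤ t) :
    ∫ w in {z : ℂ | s < ‖z‖ ∧ ‖z‖ < t},
        ∫ z in {z : ℂ | s < ‖z‖ ∧ ‖z‖ < t}, 1 / ‖1 - z * (starRingEnd ℂ) w‖ ^ 4 =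
      π ^ 2 * (1 / (s ^ 4 - 1) + 1 / (t ^ 4 - 1) - 2 / ((s * t) ^ 2 - 1)) := by
  have hs₀ : 0 ≤ s := by positivity
  have hss : 1 < s * s := by nlinarith
  have hts : 1 < t * s := by nlinarith
  have hinner : ∀ w ∈ {z : ℂ | s < ‖z‖ ∧ ‖z‖ < t},
      ∫ z in {z : ℂ | s < ‖z‖ ∧ ‖z‖ < t}, 1 / ‖1 - z * (starRingEnd ℂ) w‖ ^ 4 =
        π * (s ^ 2 / ((s * ‖w‖) ^ 2 - 1) ^ 2 - t ^ 2 / ((t * ‖w‖) ^ 2 - 1) ^ 2) := fun w hw => by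
    rw [integral_annulus_one_div_norm_one_sub_mul_pow_four hs₀ hst _
      (by rw [RCLike.norm_conj]; nlinarith [hw.1]), RCLike.norm_conj]
  have hcont : ContinuousOn
      (fun ρ => s ^ 2 / ((s * ρ) ^ 2 - 1) ^ 2 - t ^ 2 / ((t * ρ) ^ 2 - 1) ^ 2) (Icc s t) :=
    (continuousOn_const.div (by fun_prop) fun ρ hρ =>
      (pow_pos (sq_mul_sub_one_pos hs₀ hss hρ.1) 2).ne').sub
    (continuousOn_const.div (by fun_prop) fun ρ hρ =>
      (pow_pos (sq_mul_sub_one_pos hs₀ hts hρ.1) 2).ne')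
  rw [setIntegral_congr_fun measurableSet_annulus hinner, integral_const_mul,
    integral_annulus_comp_norm hs₀ hst hcont]
  simp only [smul_eq_mul]
  rw [integral_mul_sq_div_sq_sub_one_sq_sub hs₀ hst hss hts]
  ring

/-- for an annulus `A(s,t)` contained in the exterior of the closed unit disk,
`(1/π²)·∫∫_{A(s,t)×A(s,t)} 1/|1−z·conj(w)|⁴ dA(z) dA(w)
  = −(t²−s²)²·(1+(st)²)/((1−t⁴)(1−s⁴)(1−(st)²))`. -/
theorem double_integral_kernel_annulus_exterior
    (s t : ℝ) (hs : 1 < s) (hst : s < t) :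
    (1 / Real.pi ^ 2) *
        ∫ w in {z : ℂ | s < ‖z‖ ∧ ‖z‖ < t},
          ∫ z in {z : ℂ | s < ‖z‖ ∧ ‖z‖ < t}, 1 / ‖1 - z * (starRingEnd ℂ) w‖ ^ 4
      = -((t ^ 2 - s ^ 2) ^ 2 * (1 + (s * t) ^ 2)) /
          ((1 - t ^ 4) * (1 - s ^ 4) * (1 - (s * t) ^ 2)) := by
  have hs4 : 0 < s ^ 4 - 1 := sub_pos.2 (one_lt_pow₀ hs four_ne_zero)
  have ht4 : 0 < t ^ 4 - 1 := sub_pos.2 (one_lt_pow₀ (hs.trans hst) four_ne_zero)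
  have hst2 : 0 < s ^ 2 * t ^ 2 - 1 := by
    rw [← mul_pow]; exact sub_pos.2 (one_lt_pow₀ (one_lt_mul hs.le (hs.trans hst)) two_ne_zero)
  have hden : (1 - t ^ 4) * (1 - s ^ 4) * (1 - (s * t) ^ 2) ≠ 0 := by
    rw [show (1 - t ^ 4) * (1 - s ^ 4) * (1 - (s * t) ^ 2) =
      -((t ^ 4 - 1) * (s ^ 4 - 1) * (s ^ 2 * t ^ 2 - 1)) by ring]
    exact neg_ne_zero.2 (by positivity)
  rw [integral_annulus_integral_annulus_one_div_norm_one_sub_mul_conj_pow_four hs hst.le,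
    eq_div_iff hden]
  field_simp
  ring
end
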